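/- As formal power series, ∑_{n≥0} n! x^n = c(x) + c'(x) ∑_{n≥1} U_n x^n c(x)^{2n-2}, where c(x) is the Catalan generating function, c'(x) its formal derivative, and U_n the n-th ordinary ménage number. -/

import Mathlib

/-!
Inclusion–exclusion over the `2n` forbidden cells `(i, i)` and `(i, i + 1)` gives Touchard's formula
`U_n = ∑_k (-1)^(n+k) t(n,k) k!` for `n ≥ 2`, where `t(n,k)` counts the sets of `n - k` forbidden
cells no two of which share a row or a column. Numbered along a `2n`-cycle, two forbidden cells
share a row or a column exactly when they are adjacent, so `t(n,k)` counts independent sets of the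
cycle.

On the generating-function side `c' c^(2n-2) = c^(2n) / √(1 - 4x)` has `x^(m-n)`-coefficient
`C(2m, m-n)`, so the identity reads `m! = C_m + ∑_n U_n C(2m, m-n)`. After substituting Touchard's
formula, `(m - k) ∑_n (-1)^(n+k) t(n,k) C(2m, m-n)` telescopes, which leaves only the terms
`k = 0` and `k = m`.
-/

open Finset PowerSeries

/-- An ordinary ménage permutation: `π i ≠ i` and `π i ≢ i + 1 (mod n)` for all `i`. -/
def IsOrdinaryMenage {n : ℕ} (π : Equiv.Perm (Fin n)) : Prop :=
  ∀ i : Fin n, π i ≠ i ∧ (π i : ℕ) ≠ ((i : ℕ) + 1) % n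

instance {n : ℕ} (π : Equiv.Perm (Fin n)) : Decidable (IsOrdinaryMenage π) := by
  unfold IsOrdinaryMenage; infer_instance

/-- The `n`-th ordinary ménage number. -/
def ordinaryMenage (n : ℕ) : ℕ :=
  (Finset.univ.filter fun π : Equiv.Perm (Fin n) => IsOrdinaryMenage π).card

/-- The generating function of the Catalan numbers `C_k = (2k)!/(k!(k+1)!)` over `ℚ`. -/
noncomputable def catGF : PowerSeries ℚ :=
  PowerSeries.mk fun k => ((2 * k).factorial : ℚ) / ((k.factorial : ℚ) * ((k + 1).factorial : ℚ))

open scoped Nat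

theorem Finset.card_filter_powersetCard_succ_insert {α : Type*} [DecidableEq α] {s : Finset α}
    {a : α} (ha : a ∉ s) (j : ℕ) (p : Finset α → Prop) [DecidablePred p] :
    #{t ∈ powersetCard (j + 1) (insert a s) | p t} =
      #{t ∈ powersetCard (j + 1) s | p t} + #{t ∈ powersetCard j s | p (insert a t)} := by
  rw [powersetCard_succ_insert ha, filter_union, card_union_of_disjoint, filter_image,
    card_image_of_injOn]
  · intro t ht u hu htu
    have hat : a ∉ t := fun h => ha (mem_powersetCard.mp (mem_filter.mp ht).1 |>.1 h)
    have hau : a ∉ u := fun h => ha (mem_powersetCard.mp (mem_filter.mp hu).1 |>.1 h)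
    simpa [erase_insert hat, erase_insert hau] using congrArg (·.erase a) htu
  · refine disjoint_left.mpr fun t ht ht' => ?_
    obtain ⟨u, -, rfl⟩ := mem_image.mp (mem_filter.mp ht').1
    exact ha (mem_powersetCard.mp (mem_filter.mp ht).1 |>.1 (mem_insert_self a u))

theorem Finset.filter_powersetCard_insert_and_notMem {α : Type*} [DecidableEq α] {s : Finset α}
    {a : α} (ha : a ∉ s) (j : ℕ) (p : Finset α → Prop) [DecidablePred p] :
    {t ∈ powersetCard j (insert a s) | p t ∧ a ∉ t} = {t ∈ powersetCard j s | p t} := by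
  ext t
  simp only [mem_filter, mem_powersetCard]
  constructor
  · rintro ⟨⟨hts, rfl⟩, hp, hat⟩
    exact ⟨⟨(subset_insert_iff_of_notMem hat).mp hts, rfl⟩, hp⟩
  · rintro ⟨⟨hts, rfl⟩, hp⟩
    exact ⟨⟨hts.trans (subset_insert a s), rfl⟩, hp, fun h => ha (hts h)⟩

def NoConsecutive (s : Finset ℕ) : Prop := ∀ i ∈ s, i + 1 ∉ s

instance : DecidablePred NoConsecutive := fun s => by unfold NoConsecutive; infer_instance

theorem noConsecutive_insert_succ_iff {s : Finset ℕ} {t : ℕ} (hs : ∀ i ∈ s, i ≤ t) :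
    NoConsecutive (insert (t + 1) s) ↔ NoConsecutive s ∧ t ∉ s := by
  rw [NoConsecutive, NoConsecutive, forall_mem_insert]
  simp only [mem_insert, add_left_inj, not_or]
  constructor
  · rintro ⟨-, h⟩
    exact ⟨fun i hi => (h i hi).2, fun ht => (h t ht).1 rfl⟩
  · rintro ⟨h, ht⟩
    exact ⟨⟨by omega, fun h' => by have := hs _ h'; omega⟩,
      fun i hi => ⟨fun hit => ht (hit ▸ hi), h i hi⟩⟩

theorem card_noConsecutive_powersetCard_Ico (a : ℕ) :
    ∀ L j, #{s ∈ powersetCard j (Ico a (a + L)) | NoConsecutive s} = (L + 1 - j).choose j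
  | L, 0 => by simp [NoConsecutive, filter_singleton]
  | 0, j + 1 => by simp
  | 1, j + 1 => by rcases j with _ | j <;> simp [NoConsecutive, powersetCard_one, filter_singleton]
  | L + 2, j + 1 => by
    have hIco : ∀ l, Ico a (a + (l + 1)) = insert (a + l) (Ico a (a + l)) := fun l => by
      rw [← add_assoc, insert_Ico_right_eq_Ico_add_one (Nat.le_add_right a l)]
    have hinsert : {u ∈ powersetCard j (Ico a (a + (L + 1))) |
        NoConsecutive (insert (a + (L + 1)) u)} =
        {u ∈ powersetCard j (Ico a (a + (L + 1))) | NoConsecutive u ∧ a + L ∉ u} :=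
      filter_congr fun u hu => noConsecutive_insert_succ_iff (t := a + L) fun i hi => by
        have := mem_Ico.mp ((mem_powersetCard.mp hu).1 hi); omega
    rw [hIco (L + 1), card_filter_powersetCard_succ_insert (by simp), hinsert, hIco L,
      filter_powersetCard_insert_and_notMem (by simp), card_noConsecutive_powersetCard_Ico a L j,
      ← hIco L, card_noConsecutive_powersetCard_Ico a (L + 1) (j + 1)]
    rcases le_or_gt j (L + 1) with hj | hj
    · rw [show L + 2 + 1 - (j + 1) = (L + 1 - j) + 1 by omega, Nat.choose_succ_succ,
        show L + 1 + 1 - (j + 1) = L + 1 - j by omega, add_comm]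
    · rw [Nat.choose_eq_zero_of_lt (by omega), Nat.choose_eq_zero_of_lt (by omega),
        Nat.choose_eq_zero_of_lt (by omega)]

def NoCyclicConsecutive (m : ℕ) (s : Finset ℕ) : Prop := ∀ i ∈ s, (i + 1) % m ∉ s

instance (m : ℕ) : DecidablePred (NoCyclicConsecutive m) := fun s => by
  unfold NoCyclicConsecutive; infer_instance

theorem noCyclicConsecutive_iff_noConsecutive {m : ℕ} {s : Finset ℕ} (hs : s ⊆ Ico 1 m) :
    NoCyclicConsecutive m s ↔ NoConsecutive s := by
  refine forall₂_congr fun i hi => ?_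
  obtain ⟨-, him⟩ := mem_Ico.mp (hs hi)
  rcases (show i + 1 ≤ m from him).lt_or_eq with h | h
  · rw [Nat.mod_eq_of_lt h]
  · rw [h, Nat.mod_self]
    exact iff_of_true (fun h0 => by simpa using mem_Ico.mp (hs h0))
      (fun hm => by simpa using mem_Ico.mp (hs hm))

theorem noCyclicConsecutive_insert_zero_iff {m : ℕ} (hm : 2 ≤ m) {s : Finset ℕ}
    (hs : s ⊆ Ico 1 m) :
    NoCyclicConsecutive m (insert 0 s) ↔ (NoConsecutive s ∧ m - 1 ∉ s) ∧ 1 ∉ s := by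
  have h0 : 0 ∉ s := fun h => by simpa using mem_Ico.mp (hs h)
  rw [NoCyclicConsecutive, forall_mem_insert, zero_add, Nat.mod_eq_of_lt hm, and_comm,
    ← noCyclicConsecutive_iff_noConsecutive hs]
  simp only [mem_insert, one_ne_zero, false_or, not_or, and_congr_left_iff]
  intro _
  refine ⟨fun h => ⟨fun x hx => (h x hx).2, fun hs1 => (h _ hs1).1 ?_⟩,
    fun ⟨h, hs1⟩ x hx => ⟨fun hx0 => ?_, h x hx⟩⟩
  · rw [Nat.sub_add_cancel (by omega), Nat.mod_self]
  · obtain ⟨-, hxm⟩ := mem_Ico.mp (hs hx)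
    rcases (show x + 1 ≤ m from hxm).lt_or_eq with hlt | heq
    · rw [Nat.mod_eq_of_lt hlt] at hx0
      omega
    · exact hs1 (by rwa [show m - 1 = x by omega])

theorem card_noCyclicConsecutive_powersetCard_range {m : ℕ} (hm : 3 ≤ m) (j : ℕ) :
    #{s ∈ powersetCard (j + 1) (range m) | NoCyclicConsecutive m s} =
      (m - (j + 1)).choose (j + 1) + (m - j - 2).choose j := by
  have hIco : ∀ {a b}, a < b → Ico a b = insert a (Ico (a + 1) b) := fun h =>
    (insert_Ico_add_one_left_eq_Ico h).symm
  have hfree : #{s ∈ powersetCard (j + 1) (Ico 1 m) | NoCyclicConsecutive m s} =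
      (m - (j + 1)).choose (j + 1) := by
    rw [filter_congr fun s hs => noCyclicConsecutive_iff_noConsecutive (mem_powersetCard.mp hs).1,
      show m = 1 + (m - 1) by omega, card_noConsecutive_powersetCard_Ico]
    congr 1
    omega
  have hzero : #{s ∈ powersetCard j (Ico 1 m) | NoCyclicConsecutive m (insert 0 s)} =
      (m - j - 2).choose j := by
    rw [filter_congr fun s hs => noCyclicConsecutive_insert_zero_iff (by omega)
        (mem_powersetCard.mp hs).1,
      hIco (show 1 < m by omega), filter_powersetCard_insert_and_notMem (by simp),
      show Ico 2 m = insert (m - 1) (Ico 2 (2 + (m - 3))) by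
        rw [show 2 + (m - 3) = m - 1 by omega, insert_Ico_right_eq_Ico_add_one (by omega),
          Nat.sub_add_cancel (by omega)],
      filter_powersetCard_insert_and_notMem (by simp; omega), card_noConsecutive_powersetCard_Ico]
    congr 1
    omega
  rw [range_eq_Ico, hIco (by omega), card_filter_powersetCard_succ_insert (by simp), hfree, hzero]

def touchardCoeff (n k : ℕ) : ℕ := (n + k).choose (2 * k) + (n + k - 1).choose (2 * k)

theorem touchardCoeff_eq_zero_of_lt {n k : ℕ} (h : n < k) : touchardCoeff n k = 0 := by
  rw [touchardCoeff, Nat.choose_eq_zero_of_lt (by omega), Nat.choose_eq_zero_of_lt (by omega)]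

theorem touchardCoeff_self {n : ℕ} (hn : n ≠ 0) : touchardCoeff n n = 1 := by
  rw [touchardCoeff, ← two_mul, Nat.choose_self, Nat.choose_eq_zero_of_lt (by omega)]

theorem card_noCyclicConsecutive_eq_touchardCoeff {n k : ℕ} (hn : 2 ≤ n) (hk : k ≤ n) :
    #{T ∈ powersetCard (n - k) (range (2 * n)) | NoCyclicConsecutive (2 * n) T} =
      touchardCoeff n k := by
  rcases hk.lt_or_eq with hk | rfl
  · obtain ⟨j, hj⟩ : ∃ j, n - k = j + 1 := ⟨n - k - 1, by omega⟩
    rw [hj, card_noCyclicConsecutive_powersetCard_range (by omega), touchardCoeff,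
      Nat.choose_symm_of_eq_add (show 2 * n - (j + 1) = (j + 1) + 2 * k by omega),
      Nat.choose_symm_of_eq_add (show 2 * n - j - 2 = j + 2 * k by omega)]
    congr 2 <;> omega
  · rw [Nat.sub_self, touchardCoeff_self (show k ≠ 0 by omega)]
    simp [NoCyclicConsecutive, filter_singleton]

theorem card_noCyclicConsecutive_range_two_mul_of_lt {n j : ℕ} (hn : 2 ≤ n) (hj : n < j) :
    #{T ∈ powersetCard j (range (2 * n)) | NoCyclicConsecutive (2 * n) T} = 0 := by
  obtain ⟨i, rfl⟩ : ∃ i, j = i + 1 := ⟨j - 1, by omega⟩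
  rw [card_noCyclicConsecutive_powersetCard_range (by omega), Nat.choose_eq_zero_of_lt (by omega),
    Nat.choose_eq_zero_of_lt (by omega)]

namespace Equiv.Perm

variable {α : Type*} [Fintype α] [DecidableEq α]

theorem card_filter_forall_mem_apply_eq_self (S : Finset α) :
    #{π : Perm α | ∀ a ∈ S, π a = a} = (Fintype.card α - #S)! := by
  rw [← Fintype.card_subtype]
  calc Fintype.card {π : Perm α // ∀ a ∈ S, π a = a}
      = Fintype.card {π : Perm α // ∀ a, ¬a ∉ S → π a = a} :=
        Fintype.card_congr (subtypeEquivRight fun π => by simp only [not_not])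
    _ = Fintype.card (Perm {a // a ∉ S}) :=
        Fintype.card_congr (Perm.subtypeEquivSubtypePerm _).symm
    _ = (Fintype.card α - #S)! := by
        rw [Fintype.card_perm, Fintype.card_subtype_compl, Fintype.card_coe]

theorem card_filter_forall_mem_apply_eq (P : Finset (α × α))
    (hfst : Set.InjOn Prod.fst (P : Set (α × α))) (hsnd : Set.InjOn Prod.snd (P : Set (α × α))) :
    #{π : Perm α | ∀ p ∈ P, π p.1 = p.2} = (Fintype.card α - #P)! := by
  obtain ⟨σ, hσ⟩ := exists_extending_pair (fun p : P => p.1.1) (fun p : P => p.1.2)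
    (fun p q h => Subtype.ext (hfst p.2 q.2 h)) (fun p q h => Subtype.ext (hsnd p.2 q.2 h))
  rw [← card_image_of_injOn hfst, ← card_filter_forall_mem_apply_eq_self]
  refine card_equiv (Equiv.mulLeft σ⁻¹) fun π => ?_
  simp only [mem_filter, mem_univ, true_and, forall_mem_image]
  refine forall₂_congr fun p hp => ?_
  rw [coe_mulLeft, Perm.mul_apply, inv_eq_iff_eq, hσ ⟨p, hp⟩]

theorem filter_forall_mem_apply_eq_eq_empty {P : Finset (α × α)}
    (h : ¬(Set.InjOn Prod.fst (P : Set (α × α)) ∧ Set.InjOn Prod.snd (P : Set (α × α)))) :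
    ({π : Perm α | ∀ p ∈ P, π p.1 = p.2} : Finset (Perm α)) = ∅ := by
  refine filter_eq_empty_iff.mpr fun π _ hπ => h ⟨fun p hp q hq hpq => ?_, fun p hp q hq hpq => ?_⟩
  · exact Prod.ext hpq (by rw [← hπ p hp, ← hπ q hq, hpq])
  · exact Prod.ext (π.injective (by rw [hπ p hp, hπ q hq, hpq])) hpq

end Equiv.Perm

theorem Nat.mod_eq_ite_of_le {a m : ℕ} (h : a ≤ m) : a % m = if a = m then 0 else a := by
  split_ifs with ha
  · rw [ha, Nat.mod_self]
  · exact Nat.mod_eq_of_lt (lt_of_le_of_ne h ha)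

/-- The forbidden cells `2i ↦ (i, i)` and `2i + 1 ↦ (i, i + 1)`, numbered along a `2n`-cycle. -/
def menageCell (n : ℕ) [NeZero n] (x : ℕ) : Fin n × Fin n :=
  (Fin.ofNat n (x / 2), Fin.ofNat n (x / 2 + x % 2))

section MenageBoard

variable {n : ℕ} [NeZero n]

theorem isOrdinaryMenage_iff (π : Equiv.Perm (Fin n)) :
    IsOrdinaryMenage π ↔ ∀ x ∈ range (2 * n), π (menageCell n x).1 ≠ (menageCell n x).2 := by
  simp only [IsOrdinaryMenage, menageCell, mem_range, ne_eq, Fin.ext_iff, Fin.val_ofNat]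
  constructor
  · intro h x hx
    have hi : x / 2 < n := by omega
    obtain ⟨h1, h2⟩ := h ⟨x / 2, hi⟩
    rw [show Fin.ofNat n (x / 2) = ⟨x / 2, hi⟩ from Fin.ext (Nat.mod_eq_of_lt hi)]
    rcases Nat.mod_two_eq_zero_or_one x with hx2 | hx2
    · rwa [hx2, add_zero, Nat.mod_eq_of_lt hi]
    · rwa [hx2]
  · intro h i
    have h1 := h (2 * i) (by omega)
    have h2 := h (2 * i + 1) (by omega)
    rw [show 2 * (i : ℕ) / 2 = i by omega, show 2 * (i : ℕ) % 2 = 0 by omega, add_zero,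
      Fin.ofNat_val_eq_self, Nat.mod_eq_of_lt i.isLt] at h1
    rw [show (2 * (i : ℕ) + 1) / 2 = i by omega, show (2 * (i : ℕ) + 1) % 2 = 1 by omega,
      Fin.ofNat_val_eq_self] at h2
    exact ⟨h1, h2⟩

theorem menageCell_fst_val {x : ℕ} (hx : x < 2 * n) : ((menageCell n x).1 : ℕ) = x / 2 :=
  Nat.mod_eq_of_lt (by omega)

theorem menageCell_snd_val {x : ℕ} (hx : x < 2 * n) :
    ((menageCell n x).2 : ℕ) = if x + 1 = 2 * n then 0 else x / 2 + x % 2 := by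
  rw [menageCell, Fin.val_ofNat, Nat.mod_eq_ite_of_le (show x / 2 + x % 2 ≤ n by omega)]
  split_ifs <;> omega

theorem menageCell_adj_iff {x y : ℕ} (hx : x < 2 * n) (hy : y < 2 * n) :
    ((menageCell n x).1 = (menageCell n y).1 ∨ (menageCell n x).2 = (menageCell n y).2) ↔
      x = y ∨ (x + 1) % (2 * n) = y ∨ (y + 1) % (2 * n) = x := by
  rw [Fin.ext_iff, Fin.ext_iff, menageCell_fst_val hx, menageCell_fst_val hy,
    menageCell_snd_val hx, menageCell_snd_val hy,
    Nat.mod_eq_ite_of_le (show x + 1 ≤ 2 * n by omega),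
    Nat.mod_eq_ite_of_le (show y + 1 ≤ 2 * n by omega)]
  split_ifs <;> omega

theorem menageCell_injOn (hn : 2 ≤ n) : Set.InjOn (menageCell n) (range (2 * n) : Set ℕ) := by
  intro x hx y hy hxy
  have hx' := mem_range.mp hx
  have hy' := mem_range.mp hy
  rw [Prod.ext_iff, Fin.ext_iff, Fin.ext_iff, menageCell_fst_val hx', menageCell_fst_val hy',
    menageCell_snd_val hx', menageCell_snd_val hy'] at hxy
  split_ifs at hxy <;> omega

theorem injOn_image_menageCell_iff (hn : 2 ≤ n) {T : Finset ℕ} (hT : T ⊆ range (2 * n)) :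
    (Set.InjOn Prod.fst (T.image (menageCell n) : Set (Fin n × Fin n)) ∧
      Set.InjOn Prod.snd (T.image (menageCell n) : Set (Fin n × Fin n))) ↔
      NoCyclicConsecutive (2 * n) T := by
  have hT' : ∀ x ∈ T, x < 2 * n := fun x hx => mem_range.mp (hT hx)
  have hinj := (menageCell_injOn hn).mono hT
  simp only [Set.InjOn, coe_image, Set.forall_mem_image, mem_coe, ← forall₂_and, ← or_imp]
  calc (∀ x ∈ T, ∀ y ∈ T, (menageCell n x).1 = (menageCell n y).1 ∨
        (menageCell n x).2 = (menageCell n y).2 → menageCell n x = menageCell n y)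
      ↔ ∀ x ∈ T, ∀ y ∈ T, x = y ∨ (x + 1) % (2 * n) = y ∨ (y + 1) % (2 * n) = x → x = y :=
        forall₂_congr fun x hx => forall₂_congr fun y hy => by
          rw [menageCell_adj_iff (hT' x hx) (hT' y hy), hinj.eq_iff hx hy]
    _ ↔ NoCyclicConsecutive (2 * n) T := by
        refine ⟨fun h x hx hx1 => ?_, fun h x hx y hy hxy => ?_⟩
        · have hx' := h x hx _ hx1 (Or.inr (Or.inl rfl))
          rw [Nat.mod_eq_ite_of_le (show x + 1 ≤ 2 * n from hT' x hx)] at hx'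
          split_ifs at hx' <;> omega
        · rcases hxy with rfl | hxy | hxy
          · rfl
          · exact absurd (hxy ▸ hy) (h x hx)
          · exact absurd (hxy ▸ hx) (h y hy)

theorem card_filter_forall_mem_menageCell (hn : 2 ≤ n) {T : Finset ℕ} (hT : T ⊆ range (2 * n)) :
    #{π : Equiv.Perm (Fin n) | ∀ x ∈ T, π (menageCell n x).1 = (menageCell n x).2} =
      if NoCyclicConsecutive (2 * n) T then (n - #T)! else 0 := by
  rw [filter_congr fun π _ => (forall_mem_image (p := fun p : Fin n × Fin n => π p.1 = p.2)).symm]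
  split_ifs with h
  · obtain ⟨hfst, hsnd⟩ := (injOn_image_menageCell_iff hn hT).mpr h
    rw [Equiv.Perm.card_filter_forall_mem_apply_eq _ hfst hsnd, Fintype.card_fin,
      card_image_of_injOn ((menageCell_injOn hn).mono hT)]
  · rw [Equiv.Perm.filter_forall_mem_apply_eq_eq_empty
      (mt (injOn_image_menageCell_iff hn hT).mp h), card_empty]

end MenageBoard

theorem ordinaryMenage_eq_sum_card_noCyclicConsecutive {n : ℕ} (hn : 2 ≤ n) :
    (ordinaryMenage n : ℤ) = ∑ j ∈ range (2 * n + 1), (-1 : ℤ) ^ j * (n - j)! *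
      #{T ∈ powersetCard j (range (2 * n)) | NoCyclicConsecutive (2 * n) T} := by
  have : NeZero n := ⟨by omega⟩
  set S : ℕ → Finset (Equiv.Perm (Fin n)) := fun x =>
    {π | π (menageCell n x).1 = (menageCell n x).2}
  have hU : ordinaryMenage n = #((range (2 * n)).inf fun x => (S x)ᶜ) := by
    rw [ordinaryMenage]
    congr 1
    ext π
    simp [S, mem_inf, isOrdinaryMenage_iff]
  have hS : ∀ T ⊆ range (2 * n),
      #(T.inf S) = if NoCyclicConsecutive (2 * n) T then (n - #T)! else 0 := by
    intro T hT
    rw [← card_filter_forall_mem_menageCell hn hT]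
    congr 1
    ext π
    simp [S, mem_inf]
  rw [hU, inclusion_exclusion_card_inf_compl, sum_powerset, card_range]
  refine sum_congr rfl fun j _ => ?_
  rw [card_filter, Nat.cast_sum, mul_sum]
  refine sum_congr rfl fun T hT => ?_
  obtain ⟨hTsub, hTcard⟩ := mem_powersetCard.mp hT
  rw [hS T hTsub, hTcard]
  split_ifs <;> simp

theorem ordinaryMenage_eq_sum_touchardCoeff {n : ℕ} (hn : 2 ≤ n) :
    (ordinaryMenage n : ℤ) = ∑ k ∈ range (n + 1), (-1 : ℤ) ^ (n + k) * touchardCoeff n k * k ! := by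
  calc (ordinaryMenage n : ℤ)
      = ∑ j ∈ range (n + 1), (-1 : ℤ) ^ j * (n - j)! *
          #{T ∈ powersetCard j (range (2 * n)) | NoCyclicConsecutive (2 * n) T} := by
        rw [ordinaryMenage_eq_sum_card_noCyclicConsecutive hn]
        refine (sum_subset (range_subset_range.mpr (by omega)) fun j _ hj => ?_).symm
        rw [card_noCyclicConsecutive_range_two_mul_of_lt hn (by simpa using hj),
          Nat.cast_zero, mul_zero]
    _ = ∑ k ∈ range (n + 1), (-1 : ℤ) ^ (n + k) * touchardCoeff n k * k ! := by
        rw [← sum_range_reflect]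
        refine sum_congr rfl fun k hk => ?_
        have hkn : k ≤ n := Nat.lt_succ_iff.mp (mem_range.mp hk)
        rw [Nat.add_sub_cancel, Nat.sub_sub_self hkn,
          card_noCyclicConsecutive_eq_touchardCoeff hn hkn,
          show n + k = (n - k) + 2 * k by omega, pow_add, pow_mul, neg_one_sq, one_pow, mul_one]
        ring

theorem add_mul_choose_sub_one (n k : ℕ) (h : 0 < n + k) :
    ((n + k : ℕ) : ℤ) * (n + k - 1).choose (2 * k) = ((n : ℤ) - k) * (n + k).choose (2 * k) := by
  rcases lt_or_ge n k with hnk | hkn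
  · rw [Nat.choose_eq_zero_of_lt (by omega), Nat.choose_eq_zero_of_lt (by omega)]
    simp
  · have hsucc := Nat.choose_mul_succ_eq (n + k - 1) (2 * k)
    rw [Nat.sub_add_cancel h, show n + k - 2 * k = n - k by omega] at hsucc
    rw [mul_comm, mul_comm ((n : ℤ) - k), ← Nat.cast_sub hkn]
    exact_mod_cast hsucc

theorem sub_mul_sum_touchardCoeff_mul_choose (m k : ℕ) :
    ((m : ℤ) - k) * ∑ n ∈ Icc 1 m, (-1 : ℤ) ^ (n + k) * touchardCoeff n k * (2 * m).choose (m - n) =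
      -(if k = 0 then m * (2 * m).choose m else 0) := by
  rcases Nat.eq_zero_or_pos m with rfl | hm
  · simp
  set s : ℕ → ℤ := fun n => (-1) ^ (n + k) * (m + 1 - n : ℕ) * (n + k - 1).choose (2 * k) *
    (2 * m).choose (m + 1 - n)
  have step : ∀ n ∈ Icc 1 m, ((m : ℤ) - k) * ((-1 : ℤ) ^ (n + k) * touchardCoeff n k *
      (2 * m).choose (m - n)) = -(s (n + 1) - s n) := by
    intro n hn
    obtain ⟨hn1, hnm⟩ := mem_Icc.mp hn
    have hpascal := Nat.choose_succ_right_eq (2 * m) (m - n)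
    rw [show m - n + 1 = m + 1 - n by omega, show 2 * m - (m - n) = m + n by omega] at hpascal
    have hpascal' : ((2 * m).choose (m + 1 - n) * (m + 1 - n : ℕ) : ℤ) =
        (2 * m).choose (m - n) * ((m : ℤ) + n) := by exact_mod_cast hpascal
    have hkey := add_mul_choose_sub_one n k (by omega)
    simp only [s, touchardCoeff, show m + 1 - (n + 1) = m - n by omega,
      show n + 1 + k - 1 = n + k by omega]
    push_cast [Nat.cast_sub hnm] at hkey ⊢
    linear_combination (-1 : ℤ) ^ (n + k) * (-((n + k - 1).choose (2 * k) : ℤ) * hpascal' -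
      ((2 * m).choose (m - n) : ℤ) * hkey)
  rw [mul_sum, sum_congr rfl step, sum_neg_distrib, sum_Icc_sub hm]
  rcases Nat.eq_zero_or_pos k with rfl | hk
  · simp [s]
  · simp [s, Nat.choose_eq_zero_of_lt (show k < 2 * k by omega), hk.ne']

theorem sum_touchardCoeff_mul_choose {m k : ℕ} (hm : m ≠ 0) (hkm : k ≤ m) :
    ∑ n ∈ Icc 1 m, (-1 : ℤ) ^ (n + k) * touchardCoeff n k * (2 * m).choose (m - n) =
      if k = m then 1 else if k = 0 then -((2 * m).choose m : ℤ) else 0 := by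
  rcases hkm.lt_or_eq with hlt | rfl
  · have htele := sub_mul_sum_touchardCoeff_mul_choose m k
    have hmk : (m : ℤ) - k ≠ 0 := sub_ne_zero.mpr (by exact_mod_cast hlt.ne')
    rw [if_neg hlt.ne]
    split_ifs at htele ⊢ with hk0
    · subst hk0
      refine mul_left_cancel₀ (Nat.cast_ne_zero.mpr hm : (m : ℤ) ≠ 0) ?_
      push_cast at htele
      linear_combination htele
    · rw [Nat.cast_zero, neg_zero] at htele
      exact (mul_eq_zero.mp htele).resolve_left hmk
  · rw [if_pos rfl, sum_eq_single k (fun n hn hnk => by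
      rw [touchardCoeff_eq_zero_of_lt (by grind), Nat.cast_zero, mul_zero, zero_mul])
      (fun h => absurd (mem_Icc.mpr ⟨Nat.one_le_iff_ne_zero.mpr hm, le_rfl⟩) h)]
    simp [touchardCoeff_self hm, ← two_mul]

theorem sum_sum_touchardCoeff_mul_choose {m : ℕ} (hm : m ≠ 0) :
    ∑ n ∈ Icc 1 m, (∑ k ∈ range (n + 1), (-1 : ℤ) ^ (n + k) * touchardCoeff n k * k !) *
      (2 * m).choose (m - n) = (m ! : ℤ) - (2 * m).choose m := by
  calc ∑ n ∈ Icc 1 m, (∑ k ∈ range (n + 1), (-1 : ℤ) ^ (n + k) * touchardCoeff n k * k !) *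
        (2 * m).choose (m - n)
      = ∑ n ∈ Icc 1 m, ∑ k ∈ range (m + 1),
          (k ! : ℤ) * ((-1 : ℤ) ^ (n + k) * touchardCoeff n k * (2 * m).choose (m - n)) := by
        refine sum_congr rfl fun n hn => ?_
        rw [sum_mul]
        refine sum_subset (range_subset_range.mpr (by grind)) (fun k _ hk => ?_)
          |>.trans (sum_congr rfl fun k _ => by ring)
        rw [touchardCoeff_eq_zero_of_lt (by grind)]
        simp
    _ = ∑ k ∈ range (m + 1),
          (k ! : ℤ) * if k = m then 1 else if k = 0 then -((2 * m).choose m : ℤ) else 0 := by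
        rw [sum_comm]
        refine sum_congr rfl fun k hk => ?_
        rw [← mul_sum, sum_touchardCoeff_mul_choose hm (by grind)]
    _ = (m ! : ℤ) - (2 * m).choose m := by
        rw [sum_range_succ, if_pos rfl, sum_congr rfl fun k hk =>
          by rw [if_neg (mem_range.mp hk).ne, mul_ite, mul_zero], sum_ite_eq',
          if_pos (mem_range.mpr (Nat.pos_of_ne_zero hm)), Nat.factorial_zero]
        push_cast
        ring

theorem catalan_eq_choose_sub_choose {m : ℕ} (hm : m ≠ 0) :
    (catalan m : ℤ) = (2 * m).choose m - (2 * m).choose (m - 1) := by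
  have hcat := succ_mul_catalan_eq_centralBinom m
  have hpascal := Nat.choose_succ_right_eq (2 * m) (m - 1)
  rw [Nat.sub_add_cancel (Nat.one_le_iff_ne_zero.mpr hm), show 2 * m - (m - 1) = m + 1 by omega]
    at hpascal
  rw [Nat.centralBinom_eq_two_mul_choose] at hcat
  have hm1 : ((m : ℤ) + 1) ≠ 0 := by positivity
  refine mul_left_cancel₀ hm1 ?_
  have hcat' : ((m : ℤ) + 1) * catalan m = (2 * m).choose m := by exact_mod_cast hcat
  have hpascal' : ((2 * m).choose m * m : ℤ) = (2 * m).choose (m - 1) * ((m : ℤ) + 1) := by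
    exact_mod_cast hpascal
  linear_combination hcat' - hpascal'

theorem factorial_eq_catalan_add_sum_ordinaryMenage_mul_choose (m : ℕ) :
    (m ! : ℤ) = catalan m + ∑ n ∈ Icc 1 m, (ordinaryMenage n : ℤ) * (2 * m).choose (m - n) := by
  rcases Nat.eq_zero_or_pos m with rfl | hm
  · simp
  have hU : ∀ n ∈ Icc 1 m, (ordinaryMenage n : ℤ) =
      (∑ k ∈ range (n + 1), (-1 : ℤ) ^ (n + k) * touchardCoeff n k * k !) +
        if n = 1 then 1 else 0 := by
    intro n hn
    rcases (mem_Icc.mp hn).1.eq_or_lt with rfl | hn2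
    · -- for `n = 1` both forbidden cells are `(0, 0)`, so Touchard's formula is off by one
      have : ordinaryMenage 1 = 0 := by decide
      simp [this, sum_range_succ, touchardCoeff]
    · rw [ordinaryMenage_eq_sum_touchardCoeff hn2, if_neg hn2.ne', add_zero]
  rw [sum_congr rfl fun n hn => by rw [hU n hn, add_mul], sum_add_distrib,
    sum_sum_touchardCoeff_mul_choose hm.ne', catalan_eq_choose_sub_choose hm.ne']
  simp [ite_mul, sum_ite_eq', show 1 ≤ m from hm]

namespace PowerSeries

theorem coeff_mul_mk_sum_Icc {R : Type*} [CommSemiring R] (f : R⟦X⟧) (a : ℕ → R)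
    (g : ℕ → R⟦X⟧) (m : ℕ) :
    coeff m (f * mk fun e => ∑ n ∈ Icc 1 e, a n * coeff (e - n) (g n)) =
      ∑ n ∈ Icc 1 m, a n * coeff (m - n) (f * g n) := by
  set P := ∑ n ∈ Icc 1 m, C (a n) * X ^ n * g n
  have htrunc : trunc (m + 1) (mk fun e => ∑ n ∈ Icc 1 e, a n * coeff (e - n) (g n)) =
      trunc (m + 1) P := by
    ext e
    simp only [coeff_trunc]
    split_ifs with he
    · simp only [P, coeff_mk, map_sum, mul_assoc, coeff_C_mul, coeff_X_pow_mul', mul_ite,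
        mul_zero]
      rw [← sum_filter]
      congr 1
      ext n
      simp only [mem_filter, mem_Icc]
      omega
    · rfl
  rw [coeff_mul_eq_coeff_trunc_mul_trunc _ _ m.lt_succ_self, htrunc,
    ← coeff_mul_eq_coeff_trunc_mul_trunc _ _ m.lt_succ_self, mul_sum, map_sum]
  refine sum_congr rfl fun n hn => ?_
  rw [show f * (C (a n) * X ^ n * g n) = C (a n) * (X ^ n * (f * g n)) by ring, coeff_C_mul,
    coeff_X_pow_mul', if_pos (mem_Icc.mp hn).2]

def centralBinomSeries : ℕ⟦X⟧ := mk Nat.centralBinom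

theorem catalanSeries_pow_succ (j : ℕ) :
    catalanSeries ^ (j + 1) = catalanSeries ^ j + X * catalanSeries ^ (j + 2) := by
  calc catalanSeries ^ (j + 1) = catalanSeries ^ j * (catalanSeries ^ 2 * X + 1) := by
        rw [catalanSeries_sq_mul_X_add_one, pow_succ]
    _ = _ := by ring

theorem coeff_centralBinomSeries_mul_catalanSeries_pow (l j : ℕ) :
    coeff l (centralBinomSeries * catalanSeries ^ j) = (2 * l + j).choose l := by
  induction l generalizing j with
  | zero => simp [centralBinomSeries]
  | succ l ihl =>
    induction j with
    | zero => simp [centralBinomSeries, Nat.centralBinom_eq_two_mul_choose]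
    | succ j ihj =>
      rw [catalanSeries_pow_succ, mul_add, map_add, ihj, mul_left_comm, coeff_succ_X_mul, ihl,
        show 2 * (l + 1) + (j + 1) = (2 * l + j + 2) + 1 by ring, Nat.choose_succ_succ,
        show 2 * (l + 1) + j = 2 * l + j + 2 by ring, show 2 * l + (j + 2) = 2 * l + j + 2 by ring,
        add_comm]

theorem derivative_catalanSeries :
    d⁄dX ℕ catalanSeries = centralBinomSeries * catalanSeries ^ 2 := by
  ext l
  rw [coeff_derivative, coeff_centralBinomSeries_mul_catalanSeries_pow, catalanSeries_coeff,
    Nat.cast_id]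
  refine Nat.eq_of_mul_eq_mul_right (Nat.succ_pos (l + 1)) ?_
  have h := Nat.choose_succ_right_eq (2 * l + 2) l
  rw [show 2 * l + 2 - l = l + 2 by omega] at h
  rw [← h, mul_right_comm, mul_comm _ (l + 1 + 1), succ_mul_catalan_eq_centralBinom,
    Nat.centralBinom_eq_two_mul_choose]
  rfl

theorem coeff_derivative_catalanSeries_mul_pow {m n : ℕ} (hn : 1 ≤ n) (hnm : n ≤ m) :
    coeff (m - n) (d⁄dX ℕ catalanSeries * catalanSeries ^ (2 * n - 2)) =
      (2 * m).choose (m - n) := by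
  rw [derivative_catalanSeries, mul_assoc, ← pow_add,
    coeff_centralBinomSeries_mul_catalanSeries_pow]
  congr 1
  omega

end PowerSeries

theorem catGF_eq_map_catalanSeries : catGF = map (Nat.castRingHom ℚ) catalanSeries := by
  ext k
  have hfact : catalan k * (k ! * (k + 1)!) = (2 * k)! :=
    calc catalan k * (k ! * (k + 1)!) = (k + 1) * catalan k * k ! * k ! := by
          rw [Nat.factorial_succ]; ring
      _ = (2 * k).choose k * k ! * (2 * k - k)! := by
          rw [succ_mul_catalan_eq_centralBinom, Nat.centralBinom_eq_two_mul_choose, two_mul,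
            Nat.add_sub_cancel]
      _ = (2 * k)! := Nat.choose_mul_factorial_mul_factorial (by omega)
  rw [catGF, coeff_mk, coeff_map, catalanSeries_coeff, eq_natCast, eq_comm,
    eq_div_iff (by positivity)]
  exact_mod_cast hfact

theorem coeff_derivative_catGF_mul_pow {m n : ℕ} (hn : 1 ≤ n) (hnm : n ≤ m) :
    coeff (m - n) (d⁄dX ℚ catGF * catGF ^ (2 * n - 2)) = (2 * m).choose (m - n) := by
  have hd : d⁄dX ℚ catGF = map (Nat.castRingHom ℚ) (d⁄dX ℕ catalanSeries) := by
    ext l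
    simp [catGF_eq_map_catalanSeries, coeff_derivative]
  rw [hd, catGF_eq_map_catalanSeries, ← map_pow, ← map_mul, coeff_map,
    coeff_derivative_catalanSeries_mul_pow hn hnm, eq_natCast]

/-- `∑_{n≥0} n! x^n = c(x) + c'(x) ∑_{n≥1} U_n x^n c(x)^{2n-2}`.  The infinite sum is
formally summable (the `n`-th summand is divisible by `x^n`); it is the power series whose
`x^m`-coefficient is `∑_{n=1}^{m} U_n · [x^{m-n}] c(x)^{2n-2}`. -/
theorem ordinary_menage_gf :
    (PowerSeries.mk fun n => (n.factorial : ℚ)) =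
      catGF + catGF.derivativeFun *
        PowerSeries.mk (fun m =>
          ∑ n ∈ Finset.Icc 1 m,
            (ordinaryMenage n : ℚ) * PowerSeries.coeff (R := ℚ) (m - n) (catGF ^ (2 * n - 2))) := by
  ext m
  have hcoeff : coeff m catGF = catalan m := by
    rw [catGF_eq_map_catalanSeries, coeff_map, catalanSeries_coeff, eq_natCast]
  rw [coeff_mk, map_add, hcoeff, show catGF.derivativeFun = d⁄dX ℚ catGF from rfl,
    coeff_mul_mk_sum_Icc, sum_congr rfl fun n hn => by
      rw [coeff_derivative_catGF_mul_pow (mem_Icc.mp hn).1 (mem_Icc.mp hn).2]]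
  exact_mod_cast factorial_eq_catalan_add_sum_ordinaryMenage_mul_choose m
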